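/- Change-of-variables identity for the double multiplication operator: for β > 1, a positive definite matrix X, ω ∈ ℝ, and any B ∈ M_n(ℂ), ∫₀¹∫₀¹ e^{((β−1)ω v + ω u)/β} X^{(β−1)v + u} B X^{−(β−1)v − u} du dv = ∫₀¹ e^{ωs} X^{βs} B X^{−βs} f(s) ds, where f(s) = (β²/(2(β−1)))·( min(s, 2(β−1)/β − s) − max(−s, s − 2/β) ). -/

import Mathlib

/-!
Put `a = β - 1` and `F t = e^{ωt/β} X^t B X^{-t}`, so the left side is
`∫₀¹∫₀¹ F(a v + u) du dv`, and let `G` be a primitive of `F`. Integrating out `u` gives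
`a⁻¹ (∫₁^{a+1} G - ∫₀^a G)`. The trapezoid `φ = r₀ - r_a - r₁`, with ramps `r_c t = max 0 (t - c)`,
satisfies `∫₀^{a+1} r_c F = (a + 1 - c) G(a + 1) - ∫_c^{a+1} G` by parts, so `∫₀^{a+1} φ F` is the
same combination of integrals of `G`. Substituting `t = β s` turns `a⁻¹ φ(t) dt` into `f(s) ds`.
-/

open Matrix
open scoped ComplexOrder

attribute [local instance] Matrix.frobeniusNormedAddCommGroup Matrix.frobeniusNormedSpace

/-- Real matrix power via continuous functional calculus. -/
noncomputable def mpow {n : ℕ} (A : Matrix (Fin n) (Fin n) ℂ) (s : ℝ) :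
    Matrix (Fin n) (Fin n) ℂ :=
  cfc (fun x : ℝ => x ^ s) A

/-- The weight function `f(s) = (β²/(2(β-1)))(min(s, 2(β-1)/β - s) - max(-s, s - 2/β))`. -/
noncomputable def wf (β s : ℝ) : ℝ :=
  (β ^ 2 / (2 * (β - 1))) * (min s (2 * (β - 1) / β - s) - max (-s) (s - 2 / β))

open MeasureTheory intervalIntegral

lemma continuous_mpow {n : ℕ} {X : Matrix (Fin n) (Fin n) ℂ} (hX : X.IsHermitian)
    (h0 : ∀ i, hX.eigenvalues i ≠ 0) : Continuous (mpow X) := by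
  have hdiag : mpow X = fun t => (hX.eigenvectorUnitary : Matrix (Fin n) (Fin n) ℂ) *
      diagonal (fun i => ((hX.eigenvalues i ^ t : ℝ) : ℂ)) *
      star (hX.eigenvectorUnitary : Matrix (Fin n) (Fin n) ℂ) := by
    ext1 t
    rw [mpow, hX.cfc_eq, IsHermitian.cfc]
    rfl
  rw [hdiag]
  refine (continuous_const.matrix_mul (Continuous.matrix_diagonal ?_)).matrix_mul
    continuous_const
  exact continuous_pi fun i => Complex.continuous_ofReal.comp
    (continuous_const.rpow continuous_id fun _ => Or.inl (h0 i))

/-- `a` times the density of `a V + U` for independent `U, V` uniform on `[0, 1]`. -/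
noncomputable def trapezoid (a t : ℝ) : ℝ :=
  max 0 t - max 0 (t - a) - max 0 (t - 1)

section Primitive

variable {E : Type*} [NormedAddCommGroup E] [NormedSpace ℝ E] [CompleteSpace E] {F G : ℝ → E}

lemma integral_sub_smul_of_hasDerivAt (hF : Continuous F) (hG : ∀ t, HasDerivAt G (F t) t)
    (b c : ℝ) : ∫ t in c..b, (t - c) • F t = (b - c) • G b - ∫ t in c..b, G t := by
  simpa using integral_smul_deriv_eq_deriv_smul (u := fun t => t - c) (u' := fun _ => 1)
    (fun t _ => (hasDerivAt_id t).sub_const c) (fun t _ => hG t)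
    intervalIntegrable_const (hF.intervalIntegrable c b)

lemma integral_max_zero_sub_smul_of_hasDerivAt (hF : Continuous F)
    (hG : ∀ t, HasDerivAt G (F t) t) {b c : ℝ} (hc : 0 ≤ c) (hcb : c ≤ b) :
    ∫ t in 0..b, max 0 (t - c) • F t = (b - c) • G b - ∫ t in c..b, G t := by
  have hint : ∀ x y, IntervalIntegrable (fun t => max 0 (t - c) • F t) volume x y :=
    fun x y => Continuous.intervalIntegrable (by fun_prop) x y
  have hleft : ∫ t in 0..c, max 0 (t - c) • F t = 0 := by
    rw [integral_congr (g := fun _ => 0) fun t ht => ?_, intervalIntegral.integral_zero]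
    rw [Set.uIcc_of_le hc] at ht
    simp [max_eq_left (sub_nonpos.2 ht.2)]
  rw [← integral_add_adjacent_intervals (hint 0 c) (hint c b), hleft, zero_add,
    ← integral_sub_smul_of_hasDerivAt hF hG]
  refine integral_congr fun t ht => ?_
  rw [Set.uIcc_of_le hcb] at ht
  simp only [max_eq_right (sub_nonneg.2 ht.1)]

lemma integral_trapezoid_smul_of_hasDerivAt (hF : Continuous F)
    (hG : ∀ t, HasDerivAt G (F t) t) {a : ℝ} (ha : 0 ≤ a) :
    ∫ t in 0..a + 1, trapezoid a t • F t = (∫ t in 1..a + 1, G t) - ∫ t in 0..a, G t := by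
  have hGc : Continuous G := continuous_iff_continuousAt.2 fun t => (hG t).continuousAt
  have hramps : ∫ t in 0..a + 1, trapezoid a t • F t =
      (∫ t in 0..a + 1, max 0 (t - 0) • F t) - (∫ t in 0..a + 1, max 0 (t - a) • F t) -
        ∫ t in 0..a + 1, max 0 (t - 1) • F t := by
    simp only [trapezoid, sub_zero, sub_smul]
    rw [intervalIntegral.integral_sub, intervalIntegral.integral_sub] <;>
      exact Continuous.intervalIntegrable (by fun_prop) _ _
  rw [hramps, integral_max_zero_sub_smul_of_hasDerivAt hF hG le_rfl (by linarith),
    integral_max_zero_sub_smul_of_hasDerivAt hF hG ha (by linarith),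
    integral_max_zero_sub_smul_of_hasDerivAt hF hG zero_le_one (by linarith),
    ← integral_add_adjacent_intervals (hGc.intervalIntegrable 0 a) (hGc.intervalIntegrable a _)]
  module

lemma integral_integral_comp_mul_add_of_hasDerivAt (hF : Continuous F)
    (hG : ∀ t, HasDerivAt G (F t) t) {a : ℝ} (ha : a ≠ 0) :
    ∫ v in 0..1, ∫ u in 0..1, F (a * v + u) =
      a⁻¹ • ((∫ t in 1..a + 1, G t) - ∫ t in 0..a, G t) := by
  have hGc : Continuous G := continuous_iff_continuousAt.2 fun t => (hG t).continuousAt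
  have hinner : ∀ v, ∫ u in 0..1, F (a * v + u) = G (a * v + 1) - G (a * v) := fun v => by
    rw [integral_comp_add_left F, add_zero,
      integral_eq_sub_of_hasDerivAt (fun t _ => hG t) (hF.intervalIntegrable _ _)]
  simp_rw [hinner]
  rw [integral_sub ((by fun_prop : Continuous fun v => G (a * v + 1)).intervalIntegrable _ _)
      ((by fun_prop : Continuous fun v => G (a * v)).intervalIntegrable _ _),
    integral_comp_mul_add G ha, integral_comp_mul_left G ha, smul_sub]
  simp

theorem integral_integral_comp_mul_add_eq_integral_trapezoid_smul (hF : Continuous F) {a : ℝ}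
    (ha : 0 < a) :
    ∫ v in 0..1, ∫ u in 0..1, F (a * v + u) = a⁻¹ • ∫ t in 0..a + 1, trapezoid a t • F t := by
  have hG : ∀ t, HasDerivAt (fun t => ∫ x in 0..t, F x) (F t) t := fun t =>
    (hF.integral_hasStrictDerivAt 0 t).hasDerivAt
  rw [integral_integral_comp_mul_add_of_hasDerivAt hF hG ha.ne',
    integral_trapezoid_smul_of_hasDerivAt hF hG ha.le]

end Primitive

lemma wf_eq_trapezoid {β s : ℝ} (hβ : 1 < β) (hs : 0 ≤ s) :
    wf β s = β / (β - 1) * trapezoid (β - 1) (β * s) := by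
  have hβ0 : 0 < β := by linarith
  obtain ⟨t, ht, rfl⟩ : ∃ t, 0 ≤ t ∧ s = t / β := ⟨β * s, by positivity, by field_simp⟩
  have hmin : min (t / β) (2 * (β - 1) / β - t / β) = (2 * min t (β - 1) - t) / β := by
    rw [← sub_div, min_div_div_right hβ0.le]
    rcases le_total t (β - 1) with h | h
    · rw [min_eq_left h, min_eq_left (by linarith)]; ring
    · rw [min_eq_right h, min_eq_right (by linarith)]
  have hmax : max (-(t / β)) (t / β - 2 / β) = (2 * max 0 (t - 1) - t) / β := by
    rw [← neg_div, ← sub_div, max_div_div_right hβ0.le]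
    rcases le_total t 1 with h | h
    · rw [max_eq_left (by linarith), max_eq_left (by linarith)]; ring
    · rw [max_eq_right (by linarith), max_eq_right (by linarith)]; ring
  have htrap : trapezoid (β - 1) t = min t (β - 1) - max 0 (t - 1) := by
    rw [trapezoid, max_eq_right ht]
    rcases le_total t (β - 1) with h | h
    · rw [max_eq_left (by linarith), min_eq_left h]; ring
    · rw [max_eq_right (by linarith), min_eq_right h]; ring
  rw [wf, hmin, hmax, mul_div_cancel₀ _ hβ0.ne', htrap]
  field_simp
  ring

/-- Change-of-variables identity for the double multiplication operator. -/
theorem double_integral_change_of_variables {n : ℕ}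
    (X B : Matrix (Fin n) (Fin n) ℂ) (hX : X.PosDef) (β ω : ℝ) (hβ : 1 < β) :
    (∫ v in (0:ℝ)..1, ∫ u in (0:ℝ)..1,
        Real.exp (((β - 1) * ω * v + ω * u) / β) •
          (mpow X ((β - 1) * v + u) * B * mpow X (-((β - 1) * v + u))))
      = ∫ s in (0:ℝ)..1,
          (Real.exp (ω * s) * wf β s) • (mpow X (β * s) * B * mpow X (-(β * s))) := by
  have hβ0 : 0 < β := by linarith
  set F : ℝ → Matrix (Fin n) (Fin n) ℂ :=
    fun t => Real.exp (ω * t / β) • (mpow X t * B * mpow X (-t)) with hF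
  have hFc : Continuous F := by
    have := continuous_mpow hX.isHermitian fun i => (hX.eigenvalues_pos i).ne'
    fun_prop
  calc _ = ∫ v in (0:ℝ)..1, ∫ u in (0:ℝ)..1, F ((β - 1) * v + u) := by
        refine integral_congr fun v _ => integral_congr fun u _ => ?_
        rw [hF, show ((β - 1) * ω * v + ω * u) / β = ω * ((β - 1) * v + u) / β by ring]
    _ = (β - 1)⁻¹ • ∫ t in 0..β - 1 + 1, trapezoid (β - 1) t • F t :=
        integral_integral_comp_mul_add_eq_integral_trapezoid_smul hFc (by linarith)
    _ = ∫ s in (0:ℝ)..1, (β - 1)⁻¹ • β • (trapezoid (β - 1) (β * s) • F (β * s)) := by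
        rw [intervalIntegral.integral_smul, intervalIntegral.integral_smul,
          smul_integral_comp_mul_left (fun t => trapezoid (β - 1) t • F t), mul_zero, mul_one,
          sub_add_cancel]
    _ = _ := integral_congr fun s hs => by
        rw [Set.uIcc_of_le zero_le_one] at hs
        rw [wf_eq_trapezoid hβ hs.1, hF]
        simp only [smul_smul]
        congr 1
        field_simp
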